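/- Let S = K[x_1,...,x_n] with a fixed monomial order and let J, E be ideals of S. Then in(J+E) = in(J) + in(E) if and only if for every nonzero h ∈ J + E there exist f ∈ J and g ∈ E with h = f - g and in(f) ≠ in(g) (where in of the zero polynomial is interpreted so that the condition holds if one of f, g is zero and the other has leading monomial equal to in(h)). -/

import Mathlib

open MvPolynomial

variable {K : Type*} [Field K] {n : ℕ}

/-- The leading monomial (exponent vector) of a polynomial with respect to a monomial
order `m`: the maximum of the support; by convention `lm m 0 = 0`. -/
noncomputable def lm (m : MonomialOrder (Fin n)) (f : MvPolynomial (Fin n) K) :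
    Fin n →₀ ℕ :=
  m.toSyn.symm (f.support.sup fun d => m.toSyn d)

/-- The initial ideal of `I`: the ideal generated by the leading monomials of the
nonzero elements of `I`. -/
noncomputable def initialIdeal (m : MonomialOrder (Fin n))
    (I : Ideal (MvPolynomial (Fin n) K)) : Ideal (MvPolynomial (Fin n) K) :=
  Ideal.span {p | ∃ f ∈ I, f ≠ 0 ∧ p = monomial (lm m f) (1 : K)}

/-- `G` is a Gröbner basis of `I`: a finite set of nonzero polynomials generating `I`
whose leading monomials generate the initial ideal of `I`. -/
def IsGroebnerBasis (m : MonomialOrder (Fin n)) (I : Ideal (MvPolynomial (Fin n) K))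
    (G : Set (MvPolynomial (Fin n) K)) : Prop :=
  G.Finite ∧ (0 : MvPolynomial (Fin n) K) ∉ G ∧ Ideal.span G = I ∧
    Ideal.span ((fun g => monomial (lm m g) (1 : K)) '' G) = initialIdeal m I

/-- The S-polynomial `S(f,g)` with respect to the monomial order `m`. -/
noncomputable def sPoly (m : MonomialOrder (Fin n)) (f g : MvPolynomial (Fin n) K) :
    MvPolynomial (Fin n) K :=
  monomial (lm m f ⊔ lm m g - lm m f) (f.coeff (lm m f))⁻¹ * f -
    monomial (lm m f ⊔ lm m g - lm m g) (g.coeff (lm m g))⁻¹ * g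

/-- An ideal is a monomial ideal if it is generated by monomials. -/
def IsMonomialIdeal (I : Ideal (MvPolynomial (Fin n) K)) : Prop :=
  ∃ M : Set (Fin n →₀ ℕ), I = Ideal.span ((fun μ => (monomial μ (1 : K))) '' M)

/-! A split `h = f - g` with `f ∈ J`, `g ∈ E` and no cancellation of leading monomials has
`in(h) ∈ {in(f), in(g)}`, which gives `in(J + E) ⊆ in(J) + in(E)`. Conversely, if `in(h)` lies in
the monomial ideal `in(J) + in(E)`, it is divisible by `in(f₀)` for some nonzero `f₀` in `J` or `E`;
a monomial multiple of `f₀` removes the leading term of `h`, and by well-founded induction on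
`in(h)` the remainder has such a split, all of whose terms lie below `in(h)`. -/

open scoped MonomialOrder

namespace MonomialOrder

variable {σ R : Type*} (m : MonomialOrder σ)

section CommRing

variable [CommRing R] {f g r : MvPolynomial σ R}

theorem toSyn_degree_sub_of_noncancelling (hfg : f = 0 ∨ g = 0 ∨ m.degree f ≠ m.degree g) :
    m.toSyn (m.degree (f - g)) = m.toSyn (m.degree f) ⊔ m.toSyn (m.degree g) := by
  rcases hfg with rfl | rfl | hne
  · simp
  · simp
  · rw [sub_eq_add_neg, degree_add_of_ne (by rwa [degree_neg]), degree_neg]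

theorem degree_sub_lt_of_leadingTerm_eq (hlt : m.leadingTerm f = m.leadingTerm g)
    (hfg : f - g ≠ 0) : m.degree (f - g) ≺[m] m.degree f := by
  obtain ⟨hcoeff, hdeg⟩ := m.leadingTerm_eq_leadingTerm_iff.mp hlt
  refine lt_of_le_of_ne (degree_sub_le.trans (by rw [hdeg, sup_idem])) fun heq => ?_
  apply m.coeff_degree_ne_zero_iff.mpr hfg
  rw [m.toSyn.injective heq, coeff_sub, ← leadingCoeff, hcoeff, hdeg, ← leadingCoeff, sub_self]

def HasNoncancellingSplit (J E : Ideal (MvPolynomial σ R)) (h : MvPolynomial σ R) : Prop :=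
  ∃ f ∈ J, ∃ g ∈ E, h = f - g ∧ (f = 0 ∨ g = 0 ∨ m.degree f ≠ m.degree g)

namespace HasNoncancellingSplit

variable {m} {J E : Ideal (MvPolynomial σ R)}

theorem zero : m.HasNoncancellingSplit J E 0 :=
  ⟨0, J.zero_mem, 0, E.zero_mem, (sub_zero 0).symm, Or.inl rfl⟩

theorem neg_iff : m.HasNoncancellingSplit E J (-r) ↔ m.HasNoncancellingSplit J E r := by
  constructor <;> rintro ⟨f, hf, g, hg, heq, hfg⟩ <;> refine ⟨g, hg, f, hf, ?_, by tauto⟩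
  · rw [← neg_sub, ← heq, neg_neg]
  · rw [heq, neg_sub]

theorem add_left (hf : f ∈ J) (hr : m.HasNoncancellingSplit J E r)
    (hlt : r ≠ 0 → m.degree r ≺[m] m.degree f) : m.HasNoncancellingSplit J E (f + r) := by
  by_cases hr0 : r = 0
  · exact ⟨f, hf, 0, E.zero_mem, by rw [hr0, add_zero, sub_zero], Or.inr (Or.inl rfl)⟩
  obtain ⟨f', hf', g', hg', rfl, hfg'⟩ := hr
  have hsup := m.toSyn_degree_sub_of_noncancelling hfg'
  have hf'lt : m.degree f' ≺[m] m.degree f := (le_sup_left.trans hsup.ge).trans_lt (hlt hr0)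
  have hg'lt : m.degree g' ≺[m] m.degree f := (le_sup_right.trans hsup.ge).trans_lt (hlt hr0)
  refine ⟨f + f', J.add_mem hf hf', g', hg', (add_sub_assoc f f' g').symm, Or.inr (Or.inr ?_)⟩
  rw [degree_add_of_lt hf'lt]
  exact fun heq => hg'lt.ne (congrArg m.toSyn heq).symm

theorem add_right (hg : g ∈ E) (hr : m.HasNoncancellingSplit J E r)
    (hlt : r ≠ 0 → m.degree r ≺[m] m.degree g) : m.HasNoncancellingSplit J E (g + r) := by
  rw [← neg_iff, neg_add]
  refine add_left (E.neg_mem hg) (neg_iff.mpr hr) fun hr0 => ?_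
  simpa using hlt (neg_ne_zero.mp hr0)

theorem exists_degree_eq (hr : m.HasNoncancellingSplit J E r) (hr0 : r ≠ 0) :
    (∃ f ∈ J, f ≠ 0 ∧ m.degree f = m.degree r) ∨ ∃ g ∈ E, g ≠ 0 ∧ m.degree g = m.degree r := by
  obtain ⟨f, hf, g, hg, rfl, hfg⟩ := hr
  by_cases hf0 : f = 0
  · subst hf0
    exact Or.inr ⟨g, hg, by simpa using hr0, by simp⟩
  by_cases hg0 : g = 0
  · subst hg0
    exact Or.inl ⟨f, hf, hf0, by simp⟩
  have hsup := m.toSyn_degree_sub_of_noncancelling hfg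
  rcases max_choice (m.toSyn (m.degree f)) (m.toSyn (m.degree g)) with h | h
  · exact Or.inl ⟨f, hf, hf0, m.toSyn.injective (hsup.trans h).symm⟩
  · exact Or.inr ⟨g, hg, hg0, m.toSyn.injective (hsup.trans h).symm⟩

end HasNoncancellingSplit

end CommRing

theorem exists_leadingTerm_mul_eq [Field R] {f h : MvPolynomial σ R} (hf : f ≠ 0)
    (hle : m.degree f ≤ m.degree h) : ∃ q, m.leadingTerm (q * f) = m.leadingTerm h := by
  refine ⟨monomial (m.degree h - m.degree f) (m.leadingCoeff h / m.leadingCoeff f), ?_⟩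
  rw [leadingTerm_mul, leadingTerm_monomial, leadingTerm, leadingTerm, monomial_mul,
    tsub_add_cancel_of_le hle, div_mul_cancel₀ _ (m.leadingCoeff_ne_zero_iff.mpr hf)]

end MonomialOrder

section InitialIdeal

variable (m : MonomialOrder (Fin n)) {I I' J E : Ideal (MvPolynomial (Fin n) K)}

theorem lm_eq_degree (f : MvPolynomial (Fin n) K) : lm m f = m.degree f := rfl

theorem initialIdeal_eq_span_image (I : Ideal (MvPolynomial (Fin n) K)) :
    initialIdeal m I =
      Ideal.span ((monomial · (1 : K)) '' {d | ∃ f ∈ I, f ≠ 0 ∧ m.degree f = d}) := by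
  unfold initialIdeal
  refine congrArg Ideal.span (Set.ext fun p => ⟨?_, ?_⟩)
  · rintro ⟨f, hf, hf0, rfl⟩
    exact ⟨m.degree f, ⟨f, hf, hf0, rfl⟩, rfl⟩
  · rintro ⟨_, ⟨f, hf, hf0, rfl⟩, rfl⟩
    exact ⟨f, hf, hf0, rfl⟩

theorem monomial_degree_mem_initialIdeal {f : MvPolynomial (Fin n) K} (hf : f ∈ I)
    (hf0 : f ≠ 0) : monomial (m.degree f) (1 : K) ∈ initialIdeal m I :=
  Ideal.subset_span ⟨f, hf, hf0, rfl⟩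

theorem initialIdeal_mono (h : I ≤ I') : initialIdeal m I ≤ initialIdeal m I' :=
  Ideal.span_mono fun _ ⟨f, hf, hf0, hp⟩ => ⟨f, h hf, hf0, hp⟩

theorem exists_degree_le_of_monomial_mem_initialIdeal_sup {d : Fin n →₀ ℕ}
    (hd : monomial d (1 : K) ∈ initialIdeal m J + initialIdeal m E) :
    (∃ f ∈ J, f ≠ 0 ∧ m.degree f ≤ d) ∨ ∃ g ∈ E, g ≠ 0 ∧ m.degree g ≤ d := by
  have hd' : monomial d (1 : K) ∈ Ideal.span ((monomial · (1 : K)) ''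
      ({d | ∃ f ∈ J, f ≠ 0 ∧ m.degree f = d} ∪ {d | ∃ g ∈ E, g ≠ 0 ∧ m.degree g = d})) := by
    rwa [Set.image_union, Ideal.span_union, ← initialIdeal_eq_span_image,
      ← initialIdeal_eq_span_image]
  obtain ⟨_, hd'', hle⟩ := mem_ideal_span_monomial_image.mp hd' d (by simp)
  rcases hd'' with ⟨f, hf, hf0, rfl⟩ | ⟨g, hg, hg0, rfl⟩
  exacts [Or.inl ⟨f, hf, hf0, hle⟩, Or.inr ⟨g, hg, hg0, hle⟩]

theorem initialIdeal_sup_le_of_forall_hasNoncancellingSplit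
    (H : ∀ h ∈ J + E, h ≠ 0 → m.HasNoncancellingSplit J E h) :
    initialIdeal m (J + E) ≤ initialIdeal m J + initialIdeal m E := by
  refine Ideal.span_le.mpr ?_
  rintro _ ⟨h, hh, h0, rfl⟩
  rw [lm_eq_degree]
  rcases (H h hh h0).exists_degree_eq h0 with ⟨f, hf, hf0, hdeg⟩ | ⟨g, hg, hg0, hdeg⟩
  · exact Ideal.mem_sup_left (hdeg ▸ monomial_degree_mem_initialIdeal m hf hf0)
  · exact Ideal.mem_sup_right (hdeg ▸ monomial_degree_mem_initialIdeal m hg hg0)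

theorem hasNoncancellingSplit_of_initialIdeal_sup_le
    (hle : initialIdeal m (J + E) ≤ initialIdeal m J + initialIdeal m E)
    {h : MvPolynomial (Fin n) K} (hh : h ∈ J + E) : m.HasNoncancellingSplit J E h := by
  induction h using (InvImage.wf (m.toSyn ∘ m.degree) wellFounded_lt).induction with
  | _ h ih =>
  by_cases h0 : h = 0
  · exact h0 ▸ .zero
  have hrem : ∀ f ∈ J + E, m.leadingTerm f = m.leadingTerm h →
      m.HasNoncancellingSplit J E (h - f) ∧ (h - f ≠ 0 → m.degree (h - f) ≺[m] m.degree f) := by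
    intro f hf hlead
    have hdeg : m.degree f = m.degree h := (m.leadingTerm_eq_leadingTerm_iff.mp hlead).2
    have hlt : h - f ≠ 0 → m.degree (h - f) ≺[m] m.degree f :=
      fun hr0 => hdeg ▸ m.degree_sub_lt_of_leadingTerm_eq hlead.symm hr0
    refine ⟨?_, hlt⟩
    by_cases hr0 : h - f = 0
    · exact hr0 ▸ .zero
    · have hlt' : m.degree (h - f) ≺[m] m.degree h := hdeg ▸ hlt hr0
      exact ih _ hlt' (sub_mem hh hf)
  rcases exists_degree_le_of_monomial_mem_initialIdeal_sup m
    (hle (monomial_degree_mem_initialIdeal m hh h0)) with ⟨f, hf, hf0, hfle⟩ | ⟨g, hg, hg0, hgle⟩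
  · obtain ⟨q, hq⟩ := m.exists_leadingTerm_mul_eq hf0 hfle
    have hqf : q * f ∈ J := J.mul_mem_left q hf
    obtain ⟨hsplit, hlt⟩ := hrem _ (Ideal.mem_sup_left hqf) hq
    simpa using hsplit.add_left hqf hlt
  · obtain ⟨q, hq⟩ := m.exists_leadingTerm_mul_eq hg0 hgle
    have hqg : q * g ∈ E := E.mul_mem_left q hg
    obtain ⟨hsplit, hlt⟩ := hrem _ (Ideal.mem_sup_right hqg) hq
    simpa using hsplit.add_right hqg hlt

end InitialIdeal

/-- `in(J+E) = in(J) + in(E)` iff every nonzero `h ∈ J + E` can be written as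
`h = f - g` with `f ∈ J`, `g ∈ E` and `in(f) ≠ in(g)` (the condition being
satisfied by convention when `f` or `g` is zero). -/
theorem stmt4 (m : MonomialOrder (Fin n)) (J E : Ideal (MvPolynomial (Fin n) K)) :
    initialIdeal m (J + E) = initialIdeal m J + initialIdeal m E ↔
      ∀ h ∈ J + E, h ≠ 0 → ∃ f ∈ J, ∃ g ∈ E,
        h = f - g ∧ (f = 0 ∨ g = 0 ∨ lm m f ≠ lm m g) := by
  refine ⟨fun heq h hh _ => hasNoncancellingSplit_of_initialIdeal_sup_le m heq.le hh,
    fun H => le_antisymm (initialIdeal_sup_le_of_forall_hasNoncancellingSplit m H) ?_⟩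
  exact sup_le (initialIdeal_mono m le_sup_left) (initialIdeal_mono m le_sup_right)
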